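/- Let t ≥ 1 and let f : F_2^k → S be a non-constant locally (2t, 2)_ID-bounded function. Then t ≤ r^f_ID(k, t) ≤ t + k. -/

import Mathlib

/-- Length of a longest common subsequence of two binary words. -/
noncomputable def lcsLen (x y : List Bool) : ℕ :=
  sSup {n | ∃ z : List Bool, z.length = n ∧ z.Sublist x ∧ z.Sublist y}

/-- The insdel distance `d_ID(x,y) = |x| + |y| - 2·LCS(x,y)`. -/
noncomputable def dID (x y : List Bool) : ℕ :=
  x.length + y.length - 2 * lcsLen x y

/-- Number of runs (maximal blocks of consecutive equal symbols) of a binary word. -/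
def runs (x : List Bool) : ℕ := (x.destutter (· ≠ ·)).length

/-- Maximum run length of a binary word: the largest `n` such that some constant
word of length `n` occurs as a block of consecutive symbols of `x`. -/
noncomputable def maxRun (x : List Bool) : ℕ :=
  sSup {n | ∃ b : Bool, (List.replicate n b).IsInfix x}

/-- `D_t(x)`: the words of length `|x| - t` that are subsequences of `x`. -/
def Dset (t : ℕ) (x : List Bool) : Set (List Bool) :=
  {z | z.length = x.length - t ∧ z.Sublist x}

/-- `I_t(x)`: the words of length `|x| + t` that are supersequences of `x`. -/
def Iset (t : ℕ) (x : List Bool) : Set (List Bool) :=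
  {z | z.length = x.length + t ∧ x.Sublist z}

/-- A systematic encoding `x ↦ (x, p(x))` with redundancy words `p x` of length `r`
is a function-correcting insdel code for `f` correcting `t` insdel errors. -/
noncomputable def IsFCIDC {k : ℕ} {S : Type*} (f : (Fin k → Bool) → S) (t r : ℕ)
    (p : (Fin k → Bool) → List Bool) : Prop :=
  (∀ x, (p x).length = r) ∧
  ∀ x y, f x ≠ f y → 2 * t < dID (List.ofFn x ++ p x) (List.ofFn y ++ p y)

/-- The optimal redundancy `r^f_ID(k,t)`. -/
noncomputable def optRed {k : ℕ} {S : Type*} (f : (Fin k → Bool) → S) (t : ℕ) : ℕ :=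
  sInf {r | ∃ p, IsFCIDC f t r p}

/-- `p` is an irregular insdel-distance code of length `r` for the matrix `I`. -/
noncomputable def IsIrregularCode {M : ℕ} (I : Fin M → Fin M → ℕ) (r : ℕ)
    (p : Fin M → List Bool) : Prop :=
  (∀ i, (p i).length = r) ∧ ∀ i j, I i j ≤ dID (p i) (p j)

/-- `N^(1)_ID(I)`: least length of an irregular insdel-distance code for `I`. -/
noncomputable def N1 {M : ℕ} (I : Fin M → Fin M → ℕ) : ℕ :=
  sInf {r | ∃ p, IsIrregularCode I r p}

/-- `N^(2)_ID(I; K)`: least length `r ≥ K` of an irregular insdel-distance code for `I`. -/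
noncomputable def N2 {M : ℕ} (I : Fin M → Fin M → ℕ) (K : ℕ) : ℕ :=
  sInf {r | K ≤ r ∧ ∃ p, IsIrregularCode I r p}

-- The insdel distance matrix `I_f^(1)(t, x₁, …, x_M)`.
open Classical in
noncomputable def Imat1 {k M : ℕ} {S : Type*} (f : (Fin k → Bool) → S) (t : ℕ)
    (x : Fin M → Fin k → Bool) : Fin M → Fin M → ℕ :=
  fun i j => if f (x i) ≠ f (x j) then
    2 * t + 2 - dID (List.ofFn (x i)) (List.ofFn (x j)) else 0

-- The insdel distance matrix `I_f^(2)(t, x₁, …, x_M)`.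
open Classical in
noncomputable def Imat2 {k M : ℕ} {S : Type*} (f : (Fin k → Bool) → S) (t : ℕ)
    (x : Fin M → Fin k → Bool) : Fin M → Fin M → ℕ :=
  fun i j => if f (x i) ≠ f (x j) then
    2 * t + 2 + 2 * k - dID (List.ofFn (x i)) (List.ofFn (x j)) else 0

/-- The function distance `d^f_ID(a,b)`. -/
noncomputable def dfID {k : ℕ} {S : Type*} (f : (Fin k → Bool) → S) (a b : S) : ℕ :=
  sInf {d | ∃ x y : Fin k → Bool, f x = a ∧ f y = b ∧ dID (List.ofFn x) (List.ofFn y) = d}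

/-- The function distance matrix `I_f^(2)(t, f₁, …, f_E)`, with entries
`max(2(t+1+k) − d^f_ID(f_i, f_j), 0)` off the diagonal and `0` on the diagonal. -/
noncomputable def funMat2 {k E : ℕ} {S : Type*} (f : (Fin k → Bool) → S) (t : ℕ)
    (fs : Fin E → S) : Fin E → Fin E → ℕ :=
  fun i j => if i = j then 0 else 2 * (t + 1 + k) - dfID f (fs i) (fs j)

/-- The uniform `M × M` matrix with off-diagonal entries `d` and zero diagonal. -/
def uniMat (M d : ℕ) : Fin M → Fin M → ℕ := fun i j => if i = j then 0 else d

/-- The number-of-runs function on `F_2^k`. -/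
def runsFn (k : ℕ) (x : Fin k → Bool) : ℕ := runs (List.ofFn x)

/-- The VT-syndrome function `f(x) = Σ_{j=1}^k j·x_j mod (k+1)`. -/
def vtFn (k : ℕ) (x : Fin k → Bool) : ℕ :=
  (∑ j : Fin k, ((j : ℕ) + 1) * (if x j then 1 else 0)) % (k + 1)

/-- The function ball `B^f_ID(u, ρ) = f(B_ID(u, ρ))`. -/
def fball {k : ℕ} {S : Type*} (f : (Fin k → Bool) → S) (u : Fin k → Bool) (ρ : ℕ) : Set S :=
  f '' {v : Fin k → Bool | dID (List.ofFn u) (List.ofFn v) ≤ ρ}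

/-- `V_ID(r, d)`: the maximum size of an insdel ball of (integer) radius `d`
among centers in `F_2^r`. -/
noncomputable def Vid (r : ℕ) (d : ℤ) : ℕ :=
  sSup (Set.range fun x : Fin r → Bool =>
    Nat.card {y : Fin r → Bool | (dID (List.ofFn x) (List.ofFn y) : ℤ) ≤ d})

lemma lcs_ne (x y : List Bool) : {n | ∃ z : List Bool, z.length = n ∧ z.Sublist x ∧ z.Sublist y}.Nonempty :=
  ⟨0, [], rfl, List.nil_sublist _, List.nil_sublist _⟩

lemma lcs_bdd (x y : List Bool) : BddAbove {n | ∃ z : List Bool, z.length = n ∧ z.Sublist x ∧ z.Sublist y} :=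
  ⟨x.length, fun n ⟨z, hz, hx, _⟩ => hz ▸ hx.length_le⟩

lemma le_lcs {x y z : List Bool} (hx : z.Sublist x) (hy : z.Sublist y) :
    z.length ≤ lcsLen x y :=
  le_csSup (lcs_bdd x y) ⟨z, rfl, hx, hy⟩

lemma lcs_spec (x y : List Bool) :
    ∃ z : List Bool, z.length = lcsLen x y ∧ z.Sublist x ∧ z.Sublist y :=
  Nat.sSup_mem (lcs_ne x y) (lcs_bdd x y)

lemma lcs_le_left (x y : List Bool) : lcsLen x y ≤ x.length :=
  csSup_le (lcs_ne x y) (fun n ⟨z, hz, hx, _⟩ => hz ▸ hx.length_le)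

lemma lcs_le_right (x y : List Bool) : lcsLen x y ≤ y.length :=
  csSup_le (lcs_ne x y) (fun n ⟨z, hz, _, hy⟩ => hz ▸ hy.length_le)

lemma lcs_comm (x y : List Bool) : lcsLen x y = lcsLen y x := by
  unfold lcsLen; congr 1; ext n; exact ⟨fun ⟨z,h1,h2,h3⟩ => ⟨z,h1,h3,h2⟩, fun ⟨z,h1,h2,h3⟩ => ⟨z,h1,h3,h2⟩⟩

lemma lcs_self (x : List Bool) : lcsLen x x = x.length :=
  le_antisymm (lcs_le_left x x) (le_lcs (List.Sublist.refl x) (List.Sublist.refl x))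

lemma dID_comm (x y : List Bool) : dID x y = dID y x := by
  unfold dID; rw [lcs_comm]; omega

lemma dID_self (x : List Bool) : dID x x = 0 := by
  unfold dID; rw [lcs_self]; omega

/-- upper bound for LCS of concatenations -/
lemma lcs_append_le (a b c d : List Bool) :
    lcsLen (a ++ b) (c ++ d) ≤ lcsLen a c + max b.length d.length := by
  refine csSup_le (lcs_ne _ _) ?_
  rintro n ⟨z, rfl, h1, h2⟩
  rw [List.sublist_append_iff] at h1 h2
  obtain ⟨z1, z2, rfl, hz1, hz2⟩ := h1
  obtain ⟨w1, w2, hw, hw1, hw2⟩ := h2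
  rcases le_total z1.length w1.length with hle | hle
  · have hpre : z1 <+: w1 := by
      rcases List.append_eq_append_iff.1 hw with ⟨a', rfl, _⟩ | ⟨c', rfl, h⟩
      · exact ⟨a', rfl⟩
      · have : c' = [] := by
          rw [← List.length_eq_zero_iff]
          simp only [List.length_append] at hle ⊢; omega
        subst this; exact ⟨[], by simp⟩
    have : z1.length ≤ lcsLen a c := le_lcs hz1 (hpre.sublist.trans hw1)
    have : z2.length ≤ b.length := hz2.length_le
    simp only [List.length_append]; omega
  · have hpre : w1 <+: z1 := by
      rcases List.append_eq_append_iff.1 hw.symm with ⟨a', rfl, _⟩ | ⟨c', rfl, h⟩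
      · exact ⟨a', rfl⟩
      · have : c' = [] := by
          rw [← List.length_eq_zero_iff]
          simp only [List.length_append] at hle ⊢; omega
        subst this; exact ⟨[], by simp⟩
    have h1 : w1.length ≤ lcsLen a c := le_lcs (hpre.sublist.trans hz1) hw1
    have h2 : w2.length ≤ d.length := hw2.length_le
    have := congrArg List.length hw
    simp only [List.length_append] at this ⊢; omega

/-- LCS with distinct constant tails -/
lemma lcs_replicate_le (x y : List Bool) (r : ℕ) {b b' : Bool} (hbb : b ≠ b') :
    lcsLen (x ++ List.replicate r b) (y ++ List.replicate r b') ≤ max x.length y.length := by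
  refine csSup_le (lcs_ne _ _) ?_
  rintro n ⟨z, rfl, h1, h2⟩
  rw [List.sublist_append_iff] at h1 h2
  obtain ⟨z1, z2, rfl, hz1, hz2⟩ := h1
  obtain ⟨w1, w2, hw, hw1, hw2⟩ := h2
  rw [List.sublist_replicate_iff] at hz2 hw2
  obtain ⟨a, -, rfl⟩ := hz2
  obtain ⟨e, -, rfl⟩ := hw2
  rcases Nat.eq_zero_or_pos a with rfl | ha
  · have := hz1.length_le; simp only [List.length_append, List.length_replicate]; omega
  rcases Nat.eq_zero_or_pos e with rfl | he
  · have := hw1.length_le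
    have := congrArg List.length hw
    simp only [List.length_append, List.length_replicate] at this ⊢; omega
  exfalso
  have g1 : (z1 ++ List.replicate a b).getLast? = some b := by
    rw [List.getLast?_append]
    have : (List.replicate a b).getLast? = some b := by
      cases a with
      | zero => omega
      | succ m => rw [List.replicate_succ'] ; simp
    simp [this]
  have g2 : (w1 ++ List.replicate e b').getLast? = some b' := by
    rw [List.getLast?_append]
    have : (List.replicate e b').getLast? = some b' := by
      cases e with
      | zero => omega
      | succ m => rw [List.replicate_succ'] ; simp
    simp [this]
  rw [hw, g2] at g1
  exact hbb (by simpa using g1.symm)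

section Graph
variable {k t : ℕ} {S : Type*} (f : (Fin k → Bool) → S)

def confG (f : (Fin k → Bool) → S) (t : ℕ) : SimpleGraph (Fin k → Bool) where
  Adj x y := f x ≠ f y ∧ dID (List.ofFn x) (List.ofFn y) ≤ 2 * t
  symm := by constructor; rintro x y ⟨h1, h2⟩; exact ⟨h1.symm, by rwa [dID_comm]⟩
  loopless := by constructor; rintro x ⟨h, -⟩; exact h rfl

variable {f}
variable (hf : ∀ u : Fin k → Bool, (fball f u (2 * t)).ncard ≤ 2)

include hf in
lemma nbr_eq {a c d : Fin k → Bool} (h1 : (confG f t).Adj a c) (h2 : (confG f t).Adj a d) :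
    f c = f d := by
  by_contra hcd
  have hmem : ∀ v : Fin k → Bool, dID (List.ofFn a) (List.ofFn v) ≤ 2 * t → f v ∈ fball f a (2*t) :=
    fun v hv => ⟨v, hv, rfl⟩
  have hsub : ({f a, f c, f d} : Set S) ⊆ fball f a (2*t) := by
    rintro s (rfl | rfl | rfl)
    · exact hmem a (by rw [dID_self]; omega)
    · exact hmem c h1.2
    · exact hmem d h2.2
  have hfin : (fball f a (2*t)).Finite := Set.Finite.image _ (Set.toFinite _)
  have h3 : ({f a, f c, f d} : Set S).ncard = 3 :=
    Set.ncard_eq_three.2 ⟨f a, f c, f d, Ne.symm (fun h => h1.1 h.symm), Ne.symm (fun h => h2.1 h.symm), hcd, rfl⟩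
  have := Set.ncard_le_ncard hsub hfin
  have := hf a
  omega

include hf in
lemma walk_parity : ∀ {a b : Fin k → Bool} (w : (confG f t).Walk a b),
    (Even w.length → f a = f b) ∧ (¬ Even w.length → ∀ c, (confG f t).Adj a c → f c = f b) := by
  intro a b w
  induction w with
  | nil => exact ⟨fun _ => rfl, fun h => absurd (Even.zero) h⟩
  | @cons a m b h p ih =>
    constructor
    · intro he
      simp only [SimpleGraph.Walk.length_cons, Nat.even_add_one] at he
      exact ih.2 he a h.symm
    · intro ho c hc
      simp only [SimpleGraph.Walk.length_cons, Nat.even_add_one, not_not] at ho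
      rw [← nbr_eq hf h hc]
      exact ih.1 ho

open Classical in
noncomputable def col (f : (Fin k → Bool) → S) (t : ℕ) (x : Fin k → Bool) : Bool :=
  if f x = f (((confG f t).connectedComponentMk x).out) then true else false

include hf in
lemma col_adj {x y : Fin k → Bool} (h : (confG f t).Adj x y) : col f t x ≠ col f t y := by
  classical
  set z := ((confG f t).connectedComponentMk x).out with hz
  have hcomp : (confG f t).connectedComponentMk x = (confG f t).connectedComponentMk y :=
    SimpleGraph.ConnectedComponent.eq.2 h.reachable
  have hreach : (confG f t).Reachable z x := by
    rw [← SimpleGraph.ConnectedComponent.eq, hz]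
    exact ((confG f t).connectedComponentMk x).out_eq
  obtain ⟨w⟩ := hreach
  have hxy : f x ≠ f y := h.1
  unfold col
  rw [← hcomp, ← hz]
  rcases Nat.even_or_odd w.length with he | hodd
  · have hfx : f z = f x := (walk_parity hf w).1 he
    have : ¬ (f y = f z) := fun hy => hxy (hfx ▸ hy.symm ▸ rfl)
    simp [hfx.symm, this]
  · have he' : Even (w.concat h).length := by
      rw [SimpleGraph.Walk.length_concat]
      rcases hodd with ⟨m, hm⟩; exact ⟨m+1, by omega⟩
    have hfy : f z = f y := (walk_parity hf (w.concat h)).1 he'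
    have : ¬ (f x = f z) := fun hx => hxy (hx.trans hfy)
    simp [this, hfy.symm]

end Graph

section Hyper
variable {k : ℕ} {S : Type*}

lemma ofFn_update (u : Fin k → Bool) (i : Fin k) (b : Bool) :
    List.ofFn (Function.update u i b) = (List.ofFn u).set i b := by
  apply List.ext_getElem
  · simp
  · intro j h1 h2
    simp only [List.getElem_ofFn, List.getElem_set]
    by_cases h : (i : ℕ) = j
    · have hij : (⟨j, by simpa using h2⟩ : Fin k) = i := Fin.ext h.symm
      rw [if_pos h, hij, Function.update_self]
    · rw [if_neg h]
      exact Function.update_of_ne (fun hc => h (by rw [← hc])) _ _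

lemma eraseIdx_set (l : List Bool) (i : ℕ) (b : Bool) :
    (l.set i b).eraseIdx i = l.eraseIdx i := by
  apply List.ext_getElem
  · simp [List.length_eraseIdx]
  · intro j h1 h2
    rw [List.getElem_eraseIdx, List.getElem_eraseIdx]
    split
    · rw [List.getElem_set, if_neg (by omega)]
    · rw [List.getElem_set, if_neg (by omega)]

lemma dID_update_le (u : Fin k → Bool) (i : Fin k) (b : Bool) :
    dID (List.ofFn u) (List.ofFn (Function.update u i b)) ≤ 2 := by
  have hsub1 : ((List.ofFn u).eraseIdx i).Sublist (List.ofFn u) := List.eraseIdx_sublist _ _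
  have hsub2 : ((List.ofFn u).eraseIdx i).Sublist (List.ofFn (Function.update u i b)) := by
    rw [ofFn_update, ← eraseIdx_set (List.ofFn u) i b]
    exact List.eraseIdx_sublist _ _
  have hlen : ((List.ofFn u).eraseIdx i).length = k - 1 := by
    rw [List.length_eraseIdx]
    simp [i.isLt]
  have hge : k - 1 ≤ lcsLen (List.ofFn u) (List.ofFn (Function.update u i b)) :=
    hlen ▸ le_lcs hsub1 hsub2
  have hle := lcs_le_left (List.ofFn u) (List.ofFn (Function.update u i b))
  have hi := i.isLt
  unfold dID
  simp only [List.length_ofFn] at *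
  omega

lemma exists_close_pair (f : (Fin k → Bool) → S) (hnc : ∃ u v : Fin k → Bool, f u ≠ f v) :
    ∃ x y : Fin k → Bool, f x ≠ f y ∧ dID (List.ofFn x) (List.ofFn y) ≤ 2 := by
  classical
  by_contra hcon
  push_neg at hcon
  have hstep : ∀ x y : Fin k → Bool, dID (List.ofFn x) (List.ofFn y) ≤ 2 → f x = f y := by
    intro x y hd
    by_contra hne
    exact absurd hd (by simpa using hcon x y hne)
  obtain ⟨u, v, huv⟩ := hnc
  apply huv
  have key : ∀ n : ℕ, ∀ u v : Fin k → Bool,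
      (Finset.univ.filter (fun i => u i ≠ v i)).card ≤ n → f u = f v := by
    intro n
    induction n with
    | zero =>
      intro u v h
      have : u = v := by
        funext i
        by_contra hi
        have : i ∈ Finset.univ.filter (fun i => u i ≠ v i) := by simp [hi]
        have := Finset.card_pos.2 ⟨i, this⟩
        omega
      rw [this]
    | succ n ih =>
      intro u v h
      by_cases hEq : u = v
      · rw [hEq]
      · have : ∃ i, u i ≠ v i := by
          by_contra hno
          push_neg at hno
          exact hEq (funext hno)
        obtain ⟨i, hi⟩ := this
        have h1 : f u = f (Function.update u i (v i)) :=
          hstep u _ (dID_update_le u i (v i))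
        have h2 : f (Function.update u i (v i)) = f v := by
          apply ih
          have hset : Finset.univ.filter (fun j => Function.update u i (v i) j ≠ v j)
              = (Finset.univ.filter (fun j => u j ≠ v j)).erase i := by
            ext j
            simp only [Finset.mem_filter, Finset.mem_erase, Finset.mem_univ, true_and]
            rcases eq_or_ne j i with rfl | hji
            · simp [Function.update_self]
            · rw [Function.update_of_ne hji]
              tauto
          rw [hset]
          have hic : i ∈ Finset.univ.filter (fun j => u j ≠ v j) := by simp [hi]
          have := Finset.card_erase_of_mem hic
          omega
        rw [h1, h2]
  exact key k u v (le_trans (Finset.card_le_univ _) (by simp))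
end Hyper

theorem stmt18 {S : Type*} (k t : ℕ) (ht : 1 ≤ t) (f : (Fin k → Bool) → S)
    (hnc : ∃ u v : Fin k → Bool, f u ≠ f v)
    (hf : ∀ u : Fin k → Bool, (fball f u (2 * t)).ncard ≤ 2) :
    t ≤ optRed f t ∧ optRed f t ≤ t + k := by
  classical
  have hk : 1 ≤ k := by
    by_contra hk0
    obtain ⟨u, v, huv⟩ := hnc
    have : u = v := funext fun i => absurd i.isLt (by omega)
    exact huv (this ▸ rfl)
  set p : (Fin k → Bool) → List Bool := fun x => List.replicate (t + k) (col f t x) with hp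
  have hFC : IsFCIDC f t (t + k) p := by
    constructor
    · intro x; simp [hp]
    · intro x y hne
      have hlx : (List.ofFn x).length = k := List.length_ofFn
      have hly : (List.ofFn y).length = k := List.length_ofFn
      have hlpx : (p x).length = t + k := by simp [hp]
      have hlpy : (p y).length = t + k := by simp [hp]
      have hlen : (List.ofFn x ++ p x).length = k + (t + k) := by
        rw [List.length_append, hlx, hlpx]
      have hlen' : (List.ofFn y ++ p y).length = k + (t + k) := by
        rw [List.length_append, hly, hlpy]
      by_cases hcol : col f t x = col f t y
      · have hnadj : ¬ (confG f t).Adj x y := fun ha => col_adj hf ha hcol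
        have hd : ¬ (dID (List.ofFn x) (List.ofFn y) ≤ 2 * t) := fun hle => hnadj ⟨hne, hle⟩
        have hd' : 2 * t < dID (List.ofFn x) (List.ofFn y) := lt_of_not_ge hd
        have hub := lcs_append_le (List.ofFn x) (p x) (List.ofFn y) (p y)
        have hL := lcs_le_left (List.ofFn x) (List.ofFn y)
        unfold dID at hd' ⊢
        rw [hlen, hlen']
        simp only [List.length_ofFn, hlpx, hlpy] at hd' hL hub
        omega
      · have hub : lcsLen (List.ofFn x ++ p x) (List.ofFn y ++ p y)
            ≤ max (List.ofFn x).length (List.ofFn y).length :=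
          lcs_replicate_le (List.ofFn x) (List.ofFn y) (t + k) hcol
        unfold dID
        rw [hlen, hlen']
        rw [hlx, hly] at hub
        simp only [max_self] at hub
        omega
  have hmem : (t + k) ∈ {r | ∃ p, IsFCIDC f t r p} := ⟨p, hFC⟩
  constructor
  · refine le_csInf ⟨t + k, hmem⟩ ?_
    rintro r ⟨q, hq⟩
    by_contra hlt
    push_neg at hlt
    obtain ⟨x, y, hxy, hd2⟩ := exists_close_pair f hnc
    have hsep := hq.2 x y hxy
    obtain ⟨z, hz, hzx, hzy⟩ := lcs_spec (List.ofFn x) (List.ofFn y)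
    have hge : lcsLen (List.ofFn x) (List.ofFn y)
        ≤ lcsLen (List.ofFn x ++ q x) (List.ofFn y ++ q y) := by
      rw [← hz]
      exact le_lcs (hzx.trans (List.sublist_append_left _ _))
        (hzy.trans (List.sublist_append_left _ _))
    have hL := lcs_le_left (List.ofFn x) (List.ofFn y)
    unfold dID at hsep hd2
    rw [List.length_append, List.length_append, hq.1 x, hq.1 y] at hsep
    simp only [List.length_ofFn] at hsep hd2 hL
    omega
  · exact Nat.sInf_le hmem
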